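/- Let Δ be an M,N-invariant set fitting (0^M, 0^N), let r be the least element of Δ, and set s = r − M − N + 1 (so s ≥ 1). Then Δ' := {i − s : i ∈ Δ} is an M,N-invariant subset of ℕ, and Δ' fits (0^{M−1}1, 0^{N−1}1); that is, M−1 is a north step of Δ', N−1 is an east step of Δ', i ∉ Δ' and i+N ∉ Δ' for all 0 ≤ i < M−1, and i ∉ Δ' and i+M ∉ Δ' for all 0 ≤ i < N−1. -/
import Mathlib


/-- The alphabet {0, 1, •}. -/
inductive Symb where
  | zero : Symb
  | one : Symb
  | bullet : Symb
deriving DecidableEq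

/-- An `M,N`-invariant set: a subset of ℕ with finite complement,
closed under adding `M` and adding `N`. -/
def Invariant (M N : ℕ) (Δ : Set ℕ) : Prop :=
  {n : ℕ | n ∉ Δ}.Finite ∧ ∀ i ∈ Δ, i + M ∈ Δ ∧ i + N ∈ Δ

/-- `c` is a north step of `Δ`: `c ∉ Δ` and `c + N ∈ Δ`. -/
def NorthStep (N : ℕ) (Δ : Set ℕ) (c : ℕ) : Prop := c ∉ Δ ∧ c + N ∈ Δ

/-- `c` is an east step of `Δ`: `c ∉ Δ` and `c + M ∈ Δ`. -/
def EastStep (M : ℕ) (Δ : Set ℕ) (c : ℕ) : Prop := c ∉ Δ ∧ c + M ∈ Δ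

/-- `area Δ` is the number of `c ≥ M + N` with `c ∉ Δ`. -/
noncomputable def area (M N : ℕ) (Δ : Set ℕ) : ℕ := {c : ℕ | M + N ≤ c ∧ c ∉ Δ}.ncard

/-- `pdinv Δ` is the number of pairs `(c, d)` with `c < d`, `M ≤ d < c + M`,
`c` a north step of `Δ`, and `d ∉ Δ`. -/
noncomputable def pdinv (M N : ℕ) (Δ : Set ℕ) : ℕ :=
  {p : ℕ × ℕ | p.1 < p.2 ∧ M ≤ p.2 ∧ p.2 < p.1 + M ∧ NorthStep N Δ p.1 ∧ p.2 ∉ Δ}.ncard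

/-- `Δ` fits the pair of words `(v, w)`, where `v` has length `M` and `w` has length `N`. -/
def Fits (M N : ℕ) (Δ : Set ℕ) (v w : List Symb) : Prop :=
  v.length = M ∧ w.length = N ∧
  (∀ (i : ℕ) (hi : i < v.length),
    (v.get ⟨i, hi⟩ = Symb.bullet ↔ i ∈ Δ) ∧
    (v.get ⟨i, hi⟩ = Symb.one ↔ NorthStep N Δ i) ∧
    (v.get ⟨i, hi⟩ = Symb.zero ↔ (i ∉ Δ ∧ i + N ∉ Δ))) ∧
  (∀ (i : ℕ) (hi : i < w.length),
    (w.get ⟨i, hi⟩ = Symb.bullet ↔ i ∈ Δ) ∧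
    (w.get ⟨i, hi⟩ = Symb.one ↔ EastStep M Δ i) ∧
    (w.get ⟨i, hi⟩ = Symb.zero ↔ (i ∉ Δ ∧ i + M ∉ Δ)))

/-- Decrement: `dec Δ = {i : ℕ | i + 1 ∈ Δ}`. -/
def dec (Δ : Set ℕ) : Set ℕ := {i : ℕ | i + 1 ∈ Δ}

lemma word_get (L : ℕ) (hL : 0 < L) (i : ℕ)
    (hi : i < (List.replicate (L - 1) Symb.zero ++ [Symb.one]).length) :
    (List.replicate (L - 1) Symb.zero ++ [Symb.one]).get ⟨i, hi⟩ =
      if i < L - 1 then Symb.zero else Symb.one := by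
  rw [List.get_eq_getElem]
  by_cases h : i < L - 1
  · rw [List.getElem_append_left (by simpa using h)]
    simp [h]
  · have hiL : i < L := by simp at hi; omega
    have hieq : i = L - 1 := by omega
    subst hieq
    rw [List.getElem_append_right (by simp)]
    simp [h]

/-- Let `Δ` be an `M,N`-invariant set fitting `(0^M, 0^N)`, `r` its
least element, and `s = r − M − N + 1` (so `s ≥ 1`). Then `Δ' = {i − s : i ∈ Δ}` is an
`M,N`-invariant set fitting `(0^{M−1}1, 0^{N−1}1)`; that is, `M−1` is a north step of
`Δ'`, `N−1` is an east step of `Δ'`, `i ∉ Δ'` and `i + N ∉ Δ'` for all `i < M−1`, and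
`i ∉ Δ'` and `i + M ∉ Δ'` for all `i < N−1`. -/
theorem decrement_to_least (M N : ℕ) (hM : 0 < M) (hN : 0 < N)
    (Δ : Set ℕ) (hΔ : Invariant M N Δ)
    (hfit : Fits M N Δ (List.replicate M Symb.zero) (List.replicate N Symb.zero))
    (r : ℕ) (hr : IsLeast Δ r) (s : ℕ) (hs : s = r - M - N + 1) :
    1 ≤ s ∧
    Invariant M N ((fun i => i - s) '' Δ) ∧
    Fits M N ((fun i => i - s) '' Δ)
      (List.replicate (M - 1) Symb.zero ++ [Symb.one])
      (List.replicate (N - 1) Symb.zero ++ [Symb.one]) ∧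
    NorthStep N ((fun i => i - s) '' Δ) (M - 1) ∧
    EastStep M ((fun i => i - s) '' Δ) (N - 1) ∧
    (∀ i : ℕ, i < M - 1 → i ∉ (fun i => i - s) '' Δ ∧ i + N ∉ (fun i => i - s) '' Δ) ∧
    (∀ i : ℕ, i < N - 1 → i ∉ (fun i => i - s) '' Δ ∧ i + M ∉ (fun i => i - s) '' Δ) := by

  obtain ⟨hrΔ, hrleast⟩ := hr
  obtain ⟨hfin, hclos⟩ := hΔ
  obtain ⟨hv, hw, hvi, hwi⟩ := hfit
  have hv0 : ∀ i < M, i ∉ Δ ∧ i + N ∉ Δ := by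
    intro i hi
    have h := (hvi i (by simpa using hi)).2.2
    exact h.mp (by simp)
  have hw0 : ∀ i < N, i ∉ Δ ∧ i + M ∉ Δ := by
    intro i hi
    have h := (hwi i (by simpa using hi)).2.2
    exact h.mp (by simp)
  have hlow : ∀ c : ℕ, c < M + N → c ∉ Δ := by
    intro c hc
    rcases lt_or_ge c M with h1 | h1
    · exact (hv0 c h1).1
    · have h2 : c - M < N := by omega
      have := (hw0 (c - M) h2).2
      have e : c - M + M = c := by omega
      rwa [e] at this
  have hrge : M + N ≤ r := by
    by_contra h
    exact hlow r (by omega) hrΔ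
  have hreq : r = s + M + N - 1 := by omega
  have hmem : ∀ j : ℕ, j ∈ (fun i => i - s) '' Δ ↔ j + s ∈ Δ := by
    intro j
    constructor
    · rintro ⟨i, hi, rfl⟩
      have hri := hrleast hi
      have e : i - s + s = i := by omega
      rwa [e]
    · intro h
      exact ⟨j + s, h, by simp⟩
  have hns : NorthStep N ((fun i => i - s) '' Δ) (M - 1) := by
    constructor
    · rw [hmem]
      intro h
      have := hrleast h
      omega
    · rw [hmem]
      have e : M - 1 + N + s = r := by omega
      rw [e]; exact hrΔ
  have hes : EastStep M ((fun i => i - s) '' Δ) (N - 1) := by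
    constructor
    · rw [hmem]
      intro h
      have := hrleast h
      omega
    · rw [hmem]
      have e : N - 1 + M + s = r := by omega
      rw [e]; exact hrΔ
  have hlowM : ∀ i : ℕ, i < M - 1 →
      i ∉ (fun i => i - s) '' Δ ∧ i + N ∉ (fun i => i - s) '' Δ := by
    intro i hi
    constructor <;> rw [hmem] <;> intro h <;> have := hrleast h <;> omega
  have hlowN : ∀ i : ℕ, i < N - 1 →
      i ∉ (fun i => i - s) '' Δ ∧ i + M ∉ (fun i => i - s) '' Δ := by
    intro i hi
    constructor <;> rw [hmem] <;> intro h <;> have := hrleast h <;> omega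
  have hinv : Invariant M N ((fun i => i - s) '' Δ) := by
    constructor
    · apply Set.Finite.subset (hfin.image (fun i => i - s))
      intro n hn
      refine ⟨n + s, ?_, by simp⟩
      intro h
      exact hn ((hmem n).mpr h)
    · intro i hi
      rw [hmem] at hi
      constructor <;> rw [hmem]
      · have e : i + M + s = i + s + M := by omega
        rw [e]; exact (hclos _ hi).1
      · have e : i + N + s = i + s + N := by omega
        rw [e]; exact (hclos _ hi).2
  refine ⟨by omega, hinv, ⟨by simp; omega, by simp; omega, ?_, ?_⟩, hns, hes, hlowM, hlowN⟩
  · intro i hi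
    rw [word_get M hM i hi]
    have hiM : i < M := by simp at hi; omega
    by_cases h : i < M - 1
    · rw [if_pos h]
      have hL := hlowM i h
      exact ⟨iff_of_false (by simp) hL.1,
        iff_of_false (by simp) (fun h' => hL.2 h'.2),
        iff_of_true rfl hL⟩
    · rw [if_neg h]
      have hieq : i = M - 1 := by omega
      subst hieq
      exact ⟨iff_of_false (by simp) hns.1,
        iff_of_true rfl hns,
        iff_of_false (by simp) (fun h' => h'.2 hns.2)⟩
  · intro i hi
    rw [word_get N hN i hi]
    have hiN : i < N := by simp at hi; omega
    by_cases h : i < N - 1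
    · rw [if_pos h]
      have hL := hlowN i h
      exact ⟨iff_of_false (by simp) hL.1,
        iff_of_false (by simp) (fun h' => hL.2 h'.2),
        iff_of_true rfl hL⟩
    · rw [if_neg h]
      have hieq : i = N - 1 := by omega
      subst hieq
      exact ⟨iff_of_false (by simp) hes.1,
        iff_of_true rfl hes,
        iff_of_false (by simp) (fun h' => h'.2 hes.2)⟩
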